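/- Let T > 0, γ > 0, Y ≥ 0, ι ≥ 0, and ρ, v with ρv > 0; set κ := ι + ρv. Define a₂(t) = (1/(γκ))·(1 − e^{−2κ(T−t)}) and a₁(t) = (ιY/(γκ²))·(1 − e^{−κ(T−t)})². Let a₁⁰, a₂⁰ : [0,T] → ℝ be continuous, and for each n ≥ 0 let a₂^{n+1}, a₁^{n+1} : [0,T] → ℝ be differentiable with (a₂^{n+1})′(t) = 2ι·a₂^{n+1}(t) + 2ρv·a₂ⁿ(t) − 2/γ, a₂^{n+1}(T) = 0, and (a₁^{n+1})′(t) = ι·a₁^{n+1}(t) + ρv·a₁ⁿ(t) − ιY·a₂^{n+1}(t), a₁^{n+1}(T) = 0, for all t ∈ [0,T]. Then a₁ⁿ converges to a₁ uniformly on [0,T]; specifically, with M = sup_t |a₂(t) − a₂⁰(t)| and m = sup_t |a₁(t) − a₁⁰(t)|, one has |a₁(t) − a₁ⁿ(t)| ≤ (ρv(T−t))ⁿ/n! · m + (ιY/(ρv))·(2ρv(T−t))^{n+1}/(n+1)! · M for all n and t ∈ [0,T]. -/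

import Mathlib

/-!
The errors `a₂ - a₂ⁿ` and `a₁ - a₁ⁿ` vanish at `T` and solve the linear equations
`(a₂ - a₂ⁿ⁺¹)' = 2ι (a₂ - a₂ⁿ⁺¹) + 2ρv (a₂ - a₂ⁿ)` and
`(a₁ - a₁ⁿ⁺¹)' = ι (a₁ - a₁ⁿ⁺¹) + ρv (a₁ - a₁ⁿ) - ιY (a₂ - a₂ⁿ⁺¹)`.
Since the rates `2ι` and `ι` are nonnegative, variation of constants bounds such an error at `t`
by the integral over `[t, T]` of the size of its forcing. Inductively the errors are therefore
dominated by the Picard terms `(k (T - t))ⁿ / n!`, which tend to `0` uniformly on `[0, T]`.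
-/

open Set Filter Topology MeasureTheory intervalIntegral Real
open scoped Nat

theorem continuousOn_of_forall_hasDerivAt_succ {s : Set ℝ} {f f' : ℕ → ℝ → ℝ}
    (h₀ : ContinuousOn (f 0) s) (h : ∀ n, ∀ t ∈ s, HasDerivAt (f (n + 1)) (f' n t) t) :
    ∀ n, ContinuousOn (f n) s
  | 0 => h₀
  | n + 1 => continuousOn_of_forall_continuousAt fun t ht => (h n t ht).continuousAt

theorem integral_mul_pow_div_factorial (k t T : ℝ) (n : ℕ) :
    ∫ s in t..T, k * ((k * (T - s)) ^ n / n !) = (k * (T - t)) ^ (n + 1) / (n + 1)! := by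
  have hderiv : ∀ s ∈ uIcc t T, HasDerivAt (fun s => -((k * (T - s)) ^ (n + 1) / (n + 1)!))
      (k * ((k * (T - s)) ^ n / n !)) s := by
    intro s _
    have hlin : HasDerivAt (fun s => k * (T - s)) (-k) s := by
      simpa using ((hasDerivAt_id s).const_sub T).const_mul k
    refine ((hlin.pow (n + 1)).div_const ((n + 1)! : ℝ)).neg.congr_deriv ?_
    rw [Nat.factorial_succ]
    push_cast
    field_simp
  rw [integral_eq_sub_of_hasDerivAt hderiv (by apply Continuous.intervalIntegrable; fun_prop)]
  simp

/-- Variation of constants: with the integrating factor `exp (c * (t - s))` one gets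
`f t = -∫ s in t..T, exp (c * (t - s)) * r s`, and the factor is at most `1` because `c ≥ 0`. -/
theorem abs_le_integral_of_hasDerivAt_of_eq_zero {f r R : ℝ → ℝ} {c t T : ℝ} (hc : 0 ≤ c)
    (htT : t ≤ T) (hf : ∀ s ∈ Icc t T, HasDerivAt f (c * f s + r s) s) (hfT : f T = 0)
    (hr : ContinuousOn r (Icc t T)) (hR : IntervalIntegrable R volume t T)
    (hrR : ∀ s ∈ Icc t T, |r s| ≤ R s) :
    |f t| ≤ ∫ s in t..T, R s := by
  have hderiv : ∀ s ∈ uIcc t T, HasDerivAt (fun s => exp (c * (t - s)) * f s)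
      (exp (c * (t - s)) * r s) s := by
    rw [uIcc_of_le htT]
    intro s hs
    have := ((((hasDerivAt_id s).const_sub t).const_mul c).exp).mul (hf s hs)
    refine this.congr_deriv ?_
    simp only [id]
    ring
  have hint : IntervalIntegrable (fun s => exp (c * (t - s)) * r s) volume t T := by
    apply ContinuousOn.intervalIntegrable
    rw [uIcc_of_le htT]
    exact (by fun_prop : Continuous fun s => exp (c * (t - s))).continuousOn.mul hr
  have hft : f t = -∫ s in t..T, exp (c * (t - s)) * r s := by
    rw [integral_eq_sub_of_hasDerivAt hderiv hint]
    simp [hfT]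
  rw [hft, abs_neg, ← Real.norm_eq_abs]
  refine norm_integral_le_of_norm_le htT (ae_of_all _ fun s hs => ?_) hR
  have hexp : exp (c * (t - s)) ≤ 1 := exp_le_one_iff.mpr (by nlinarith [hs.1])
  calc ‖exp (c * (t - s)) * r s‖ = exp (c * (t - s)) * |r s| := by
        rw [norm_mul, Real.norm_eq_abs, abs_exp, Real.norm_eq_abs]
    _ ≤ 1 * |r s| := by gcongr
    _ ≤ R s := by simpa using hrR s (Ioc_subset_Icc_self hs)

section Iteration

variable {c k T : ℝ} {A : ℝ → ℝ} {f : ℕ → ℝ → ℝ}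

theorem abs_sub_iterate_le {g M : ℝ} (hc : 0 ≤ c) (hk : 0 ≤ k)
    (hA : ∀ t ∈ Icc 0 T, HasDerivAt A (c * A t + k * A t - g) t) (hAT : A T = 0)
    (hf₀ : ContinuousOn (f 0) (Icc 0 T))
    (hf : ∀ n, ∀ t ∈ Icc 0 T, HasDerivAt (f (n + 1)) (c * f (n + 1) t + k * f n t - g) t)
    (hfT : ∀ n, f (n + 1) T = 0) (hM : ∀ t ∈ Icc 0 T, |A t - f 0 t| ≤ M) :
    ∀ n, ∀ t ∈ Icc 0 T, |A t - f n t| ≤ (k * (T - t)) ^ n / n ! * M := by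
  have hAc : ContinuousOn A (Icc 0 T) :=
    continuousOn_of_forall_continuousAt fun t ht => (hA t ht).continuousAt
  have hfc := continuousOn_of_forall_hasDerivAt_succ hf₀ hf
  intro n
  induction n with
  | zero => simpa using hM
  | succ n ih =>
    intro t ht
    have hsub : Icc t T ⊆ Icc 0 T := Icc_subset_Icc_left ht.1
    have hbound := abs_le_integral_of_hasDerivAt_of_eq_zero (f := fun s => A s - f (n + 1) s)
      (r := fun s => k * (A s - f n s)) (R := fun s => M * (k * ((k * (T - s)) ^ n / n !)))
      hc ht.2 (fun s hs => ((hA s (hsub hs)).sub (hf n s (hsub hs))).congr_deriv (by ring))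
      (by simp [hAT, hfT]) (((hAc.sub (hfc n)).const_smul k).mono hsub)
      (by apply Continuous.intervalIntegrable; fun_prop)
      (fun s hs => by
        rw [abs_mul, abs_of_nonneg hk]
        calc k * |A s - f n s| ≤ k * ((k * (T - s)) ^ n / n ! * M) := by
              gcongr
              exact ih s (hsub hs)
          _ = M * (k * ((k * (T - s)) ^ n / n !)) := by ring)
    rwa [intervalIntegral.integral_const_mul, integral_mul_pow_div_factorial, mul_comm] at hbound

/-- The relation `hCb`, i.e. `C = b / (k' - k)`, lets the bound reproduce itself: the forcing
`b M (k' (T - s))ⁿ⁺¹/(n+1)!` and the propagated `k C M (k' (T - s))ⁿ⁺¹/(n+1)!` add up to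
`C M k' (k' (T - s))ⁿ⁺¹/(n+1)!`, whose integral over `[t, T]` is `C M (k' (T - t))ⁿ⁺²/(n+2)!`. -/
theorem abs_sub_iterate_le_of_forcing {k' b C m M : ℝ} {B : ℝ → ℝ} {h : ℕ → ℝ → ℝ}
    (hc : 0 ≤ c) (hk : 0 ≤ k) (hk' : 0 ≤ k') (hb : 0 ≤ b) (hC : 0 ≤ C) (hM : 0 ≤ M)
    (hCb : b + k * C = k' * C)
    (hA : ∀ t ∈ Icc 0 T, HasDerivAt A (c * A t + k * A t - b * B t) t) (hAT : A T = 0)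
    (hf₀ : ContinuousOn (f 0) (Icc 0 T))
    (hf : ∀ n, ∀ t ∈ Icc 0 T,
      HasDerivAt (f (n + 1)) (c * f (n + 1) t + k * f n t - b * h (n + 1) t) t)
    (hfT : ∀ n, f (n + 1) T = 0) (hB : ContinuousOn B (Icc 0 T))
    (hh : ∀ n, ContinuousOn (h (n + 1)) (Icc 0 T))
    (hBh : ∀ n, ∀ t ∈ Icc 0 T, |B t - h (n + 1) t| ≤ (k' * (T - t)) ^ (n + 1) / (n + 1)! * M)
    (hm : ∀ t ∈ Icc 0 T, |A t - f 0 t| ≤ m) :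
    ∀ n, ∀ t ∈ Icc 0 T, |A t - f n t| ≤
      (k * (T - t)) ^ n / n ! * m + C * ((k' * (T - t)) ^ (n + 1) / (n + 1)!) * M := by
  have hAc : ContinuousOn A (Icc 0 T) :=
    continuousOn_of_forall_continuousAt fun t ht => (hA t ht).continuousAt
  have hfc := continuousOn_of_forall_hasDerivAt_succ hf₀ hf
  intro n
  induction n with
  | zero =>
    intro t ht
    have hk'T : 0 ≤ k' * (T - t) := mul_nonneg hk' (sub_nonneg.mpr ht.2)
    simp only [pow_zero, Nat.factorial_zero, Nat.cast_one, div_one, one_mul, zero_add, pow_one]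
    linarith [hm t ht, mul_nonneg (mul_nonneg hC hk'T) hM]
  | succ n ih =>
    intro t ht
    have hsub : Icc t T ⊆ Icc 0 T := Icc_subset_Icc_left ht.1
    have hbound := abs_le_integral_of_hasDerivAt_of_eq_zero (f := fun s => A s - f (n + 1) s)
      (r := fun s => k * (A s - f n s) - b * (B s - h (n + 1) s))
      (R := fun s => m * (k * ((k * (T - s)) ^ n / n !)) +
        C * M * (k' * ((k' * (T - s)) ^ (n + 1) / (n + 1)!)))
      hc ht.2 (fun s hs => ((hA s (hsub hs)).sub (hf n s (hsub hs))).congr_deriv (by ring))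
      (by simp [hAT, hfT])
      ((((hAc.sub (hfc n)).const_smul k).sub ((hB.sub (hh n)).const_smul b)).mono hsub)
      (by apply Continuous.intervalIntegrable; fun_prop)
      (fun s hs => by
        have hs₀ := hsub hs
        calc |k * (A s - f n s) - b * (B s - h (n + 1) s)|
            ≤ k * |A s - f n s| + b * |B s - h (n + 1) s| := by
              refine (abs_sub _ _).trans_eq ?_
              rw [abs_mul, abs_mul, abs_of_nonneg hk, abs_of_nonneg hb]
          _ ≤ k * ((k * (T - s)) ^ n / n ! * m
                + C * ((k' * (T - s)) ^ (n + 1) / (n + 1)!) * M)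
              + b * ((k' * (T - s)) ^ (n + 1) / (n + 1)! * M) := by
              gcongr
              exacts [ih s hs₀, hBh n s hs₀]
          _ = _ := by linear_combination ((k' * (T - s)) ^ (n + 1) / (n + 1)! * M) * hCb)
    rw [intervalIntegral.integral_add (by apply Continuous.intervalIntegrable; fun_prop)
      (by apply Continuous.intervalIntegrable; fun_prop), intervalIntegral.integral_const_mul m,
      intervalIntegral.integral_const_mul (C * M), integral_mul_pow_div_factorial,
      integral_mul_pow_div_factorial] at hbound
    linarith

end Iteration

theorem hasDerivAt_one_sub_exp (γ κ T t : ℝ) (hκ : κ ≠ 0) :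
    HasDerivAt (fun t => 1 / (γ * κ) * (1 - exp (-2 * κ * (T - t))))
      (2 * κ * (1 / (γ * κ) * (1 - exp (-2 * κ * (T - t)))) - 2 / γ) t := by
  have hlin : HasDerivAt (fun t => -2 * κ * (T - t)) (2 * κ) t := by
    simpa using ((hasDerivAt_id t).const_sub T).const_mul (-2 * κ)
  refine ((hlin.exp.const_sub 1).const_mul (1 / (γ * κ))).congr_deriv ?_
  field_simp
  ring

theorem hasDerivAt_sq_one_sub_exp (γ κ b T t : ℝ) (hκ : κ ≠ 0) :
    HasDerivAt (fun t => b / (γ * κ ^ 2) * (1 - exp (-κ * (T - t))) ^ 2)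
      (κ * (b / (γ * κ ^ 2) * (1 - exp (-κ * (T - t))) ^ 2)
        - b * (1 / (γ * κ) * (1 - exp (-2 * κ * (T - t))))) t := by
  have hlin : HasDerivAt (fun t => -κ * (T - t)) κ t := by
    simpa using ((hasDerivAt_id t).const_sub T).const_mul (-κ)
  have hsq : exp (-2 * κ * (T - t)) = exp (-κ * (T - t)) ^ 2 := by
    rw [← exp_nat_mul]; ring_nf
  refine (((hlin.exp.const_sub 1).pow 2).const_mul (b / (γ * κ ^ 2))).congr_deriv ?_
  rw [hsq]
  field_simp
  ring

theorem tendstoUniformlyOn_of_dist_le {α β : Type*} [PseudoMetricSpace β] {F : ℕ → α → β}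
    {f : α → β} {s : Set α} {b : ℕ → ℝ} (hb : Tendsto b atTop (𝓝 0))
    (h : ∀ n, ∀ x ∈ s, dist (f x) (F n x) ≤ b n) : TendstoUniformlyOn F f atTop s :=
  Metric.tendstoUniformlyOn_iff.mpr fun _ hε =>
    (hb.eventually (gt_mem_nhds hε)).mono fun n hn x hx => (h n x hx).trans_lt hn

theorem tendsto_pow_div_factorial_mul_add (x y C m M : ℝ) :
    Tendsto (fun n : ℕ => x ^ n / n ! * m + C * (y ^ (n + 1) / (n + 1)!) * M) atTop (𝓝 0) := by
  have hx := (FloorSemiring.tendsto_pow_div_factorial_atTop x).mul_const m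
  have hy := (((FloorSemiring.tendsto_pow_div_factorial_atTop y).comp
    (tendsto_add_atTop_nat 1)).const_mul C).mul_const M
  simpa using hx.add hy

theorem stmt_17_general (T γ Y ι ρ v : ℝ) (hT : 0 < T) (hY : 0 ≤ Y)
    (hι : 0 ≤ ι) (hρv : 0 < ρ * v)
    (a₁seq a₂seq : ℕ → ℝ → ℝ)
    (hcont₁ : ContinuousOn (a₁seq 0) (Set.Icc 0 T))
    (hcont₂ : ContinuousOn (a₂seq 0) (Set.Icc 0 T))
    (hode₂ : ∀ n, ∀ t ∈ Set.Icc (0 : ℝ) T,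
      HasDerivAt (a₂seq (n + 1))
        (2 * ι * a₂seq (n + 1) t + 2 * ρ * v * a₂seq n t - 2 / γ) t)
    (hterm₂ : ∀ n, a₂seq (n + 1) T = 0)
    (hode₁ : ∀ n, ∀ t ∈ Set.Icc (0 : ℝ) T,
      HasDerivAt (a₁seq (n + 1))
        (ι * a₁seq (n + 1) t + ρ * v * a₁seq n t - ι * Y * a₂seq (n + 1) t) t)
    (hterm₁ : ∀ n, a₁seq (n + 1) T = 0) :
    let κ : ℝ := ι + ρ * v
    let a₂ : ℝ → ℝ := fun t => (1 / (γ * κ)) * (1 - Real.exp (-2 * κ * (T - t)))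
    let a₁ : ℝ → ℝ := fun t => (ι * Y / (γ * κ ^ 2)) * (1 - Real.exp (-κ * (T - t))) ^ 2
    let M : ℝ := sSup ((fun t => |a₂ t - a₂seq 0 t|) '' Set.Icc 0 T)
    let m : ℝ := sSup ((fun t => |a₁ t - a₁seq 0 t|) '' Set.Icc 0 T)
    TendstoUniformlyOn a₁seq a₁ Filter.atTop (Set.Icc 0 T) ∧
    ∀ n, ∀ t ∈ Set.Icc (0 : ℝ) T,
      |a₁ t - a₁seq n t| ≤ (ρ * v * (T - t)) ^ n / (n.factorial : ℝ) * m +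
        (ι * Y / (ρ * v)) * ((2 * ρ * v * (T - t)) ^ (n + 1) / ((n + 1).factorial : ℝ)) * M := by
  intro κ a₂ a₁ M m
  have hκ : κ ≠ 0 := by positivity
  have ha₂ (t : ℝ) : HasDerivAt a₂ (2 * ι * a₂ t + 2 * ρ * v * a₂ t - 2 / γ) t :=
    (hasDerivAt_one_sub_exp γ κ T t hκ).congr_deriv (by simp only [κ]; ring)
  have ha₁ (t : ℝ) : HasDerivAt a₁ (ι * a₁ t + ρ * v * a₁ t - ι * Y * a₂ t) t :=
    (hasDerivAt_sq_one_sub_exp γ κ (ι * Y) T t hκ).congr_deriv (by simp only [κ]; ring)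
  have ha₂c : Continuous a₂ := continuous_iff_continuousAt.mpr fun t => (ha₂ t).continuousAt
  have ha₁c : Continuous a₁ := continuous_iff_continuousAt.mpr fun t => (ha₁ t).continuousAt
  have hM (t) (ht : t ∈ Icc 0 T) : |a₂ t - a₂seq 0 t| ≤ M :=
    ((ha₂c.continuousOn.sub hcont₂).abs).le_sSup_image_Icc ht
  have hm (t) (ht : t ∈ Icc 0 T) : |a₁ t - a₁seq 0 t| ≤ m :=
    ((ha₁c.continuousOn.sub hcont₁).abs).le_sSup_image_Icc ht
  have hTmem : T ∈ Icc 0 T := ⟨hT.le, le_rfl⟩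
  have hM₀ : 0 ≤ M := (abs_nonneg _).trans (hM T hTmem)
  have hm₀ : 0 ≤ m := (abs_nonneg _).trans (hm T hTmem)
  have hbound₂ := abs_sub_iterate_le (by positivity) (by linarith) (fun t _ => ha₂ t)
    (by simp [a₂]) hcont₂ hode₂ hterm₂ hM
  have hbound₁ := abs_sub_iterate_le_of_forcing (C := ι * Y / (ρ * v)) (by positivity)
    hρv.le (by linarith) (by positivity) (by positivity) hM₀
    (by linear_combination -mul_div_cancel₀ (ι * Y) hρv.ne') (fun t _ => ha₁ t)
    (by simp [a₁]) hcont₁ hode₁ hterm₁ ha₂c.continuousOn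
    (continuousOn_of_forall_hasDerivAt_succ hcont₂ hode₂ <| · + 1) (fun n => hbound₂ (n + 1)) hm
  refine ⟨tendstoUniformlyOn_of_dist_le (tendsto_pow_div_factorial_mul_add (ρ * v * T)
    (2 * ρ * v * T) (ι * Y / (ρ * v)) m M) fun n t ht => ?_, hbound₁⟩
  rw [Real.dist_eq]
  refine (hbound₁ n t ht).trans ?_
  have hρvt : 0 ≤ ρ * v * (T - t) := mul_nonneg hρv.le (sub_nonneg.mpr ht.2)
  gcongr <;> linarith [ht.1]

/-- Theorem 4.1(ii), first-order coefficient: the policy-iteration coefficients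
`a₁ⁿ` converge uniformly on `[0,T]` to the equilibrium coefficient `a₁`, with
the explicit bound
`|a₁(t) − a₁ⁿ(t)| ≤ (ρv(T−t))ⁿ/n!·m + (ιY/(ρv))·(2ρv(T−t))^{n+1}/(n+1)!·M`. -/
theorem stmt_17 (T γ Y ι ρ v : ℝ) (hT : 0 < T) (hγ : 0 < γ) (hY : 0 ≤ Y)
    (hι : 0 ≤ ι) (hρv : 0 < ρ * v)
    (a₁seq a₂seq : ℕ → ℝ → ℝ)
    (hcont₁ : ContinuousOn (a₁seq 0) (Set.Icc 0 T))
    (hcont₂ : ContinuousOn (a₂seq 0) (Set.Icc 0 T))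
    (hode₂ : ∀ n, ∀ t ∈ Set.Icc (0 : ℝ) T,
      HasDerivAt (a₂seq (n + 1))
        (2 * ι * a₂seq (n + 1) t + 2 * ρ * v * a₂seq n t - 2 / γ) t)
    (hterm₂ : ∀ n, a₂seq (n + 1) T = 0)
    (hode₁ : ∀ n, ∀ t ∈ Set.Icc (0 : ℝ) T,
      HasDerivAt (a₁seq (n + 1))
        (ι * a₁seq (n + 1) t + ρ * v * a₁seq n t - ι * Y * a₂seq (n + 1) t) t)
    (hterm₁ : ∀ n, a₁seq (n + 1) T = 0) :
    let κ : ℝ := ι + ρ * v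
    let a₂ : ℝ → ℝ := fun t => (1 / (γ * κ)) * (1 - Real.exp (-2 * κ * (T - t)))
    let a₁ : ℝ → ℝ := fun t => (ι * Y / (γ * κ ^ 2)) * (1 - Real.exp (-κ * (T - t))) ^ 2
    let M : ℝ := sSup ((fun t => |a₂ t - a₂seq 0 t|) '' Set.Icc 0 T)
    let m : ℝ := sSup ((fun t => |a₁ t - a₁seq 0 t|) '' Set.Icc 0 T)
    TendstoUniformlyOn a₁seq a₁ Filter.atTop (Set.Icc 0 T) ∧
    ∀ n, ∀ t ∈ Set.Icc (0 : ℝ) T,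
      |a₁ t - a₁seq n t| ≤ (ρ * v * (T - t)) ^ n / (n.factorial : ℝ) * m +
        (ι * Y / (ρ * v)) * ((2 * ρ * v * (T - t)) ^ (n + 1) / ((n + 1).factorial : ℝ)) * M :=
  stmt_17_general T γ Y ι ρ v hT hY hι hρv a₁seq a₂seq hcont₁ hcont₂ hode₂ hterm₂ hode₁ hterm₁
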